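/- arXiv:2211.11891 — 3 statements merged into one kernel-verified Lean document; each statement's English description precedes it below -/
import Mathlib

section
/- With the Sinkhorn map R and Jacobian J_R as above (for an entrywise positive matrix K), any fixed point v of R with strictly positive entries is an eigenvector of J_R(v) with eigenvalue 1: J_R(v) v = v. Moreover J_R(v) is an entrywise positive matrix, so by Perron–Frobenius theory, 1 is the spectral radius (largest eigenvalue) of J_R(v) and v is its Perron eigenvector. -/
open Matrix

lemma perron_bound_aux {m : ℕ} (J : Matrix (Fin m) (Fin m) ℝ)
    (hpos : ∀ i j, 0 < J i j) (v : Fin m → ℝ) (hv : ∀ i, 0 < v i)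
    (hJv : J.mulVec v = v) (μ : ℝ) (w : Fin m → ℝ) (hw : w ≠ 0)
    (heig : J.mulVec w = μ • w) : |μ| ≤ 1 := by
  rcases Nat.eq_zero_or_pos m with hm | hm
  · subst hm; exact absurd (funext fun i => i.elim0) hw
  haveI : Nonempty (Fin m) := ⟨⟨0, hm⟩⟩
  obtain ⟨i₀, -, hmax⟩ := Finset.exists_max_image Finset.univ
    (fun i => |w i| / v i) ⟨⟨0, hm⟩, Finset.mem_univ _⟩
  set c := |w i₀| / v i₀ with hc
  obtain ⟨k, hk⟩ : ∃ k, w k ≠ 0 := by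
    by_contra h; push_neg at h; exact hw (funext h)
  have hcpos : 0 < c := lt_of_lt_of_le (div_pos (abs_pos.mpr hk) (hv k))
    (hmax k (Finset.mem_univ k))
  have hle : ∀ k, |w k| ≤ c * v k := fun k => by
    have := hmax k (Finset.mem_univ k)
    calc |w k| = (|w k| / v k) * v k := by rw [div_mul_cancel₀ _ (hv k).ne']
    _ ≤ c * v k := by
      exact mul_le_mul_of_nonneg_right this (hv k).le
  have h1 : |μ| * |w i₀| ≤ c * v i₀ := by
    have := congrFun heig i₀
    simp only [Matrix.mulVec, dotProduct, Pi.smul_apply, smul_eq_mul] at this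
    calc |μ| * |w i₀| = |∑ k, J i₀ k * w k| := by rw [← abs_mul, this]
    _ ≤ ∑ k, |J i₀ k * w k| := Finset.abs_sum_le_sum_abs _ _
    _ ≤ ∑ k, J i₀ k * (c * v k) := by
        refine Finset.sum_le_sum fun k _ => ?_
        rw [abs_mul, abs_of_pos (hpos i₀ k)]
        exact mul_le_mul_of_nonneg_left (hle k) (hpos i₀ k).le
    _ = c * ∑ k, J i₀ k * v k := by rw [Finset.mul_sum]; congr 1; ext k; ring
    _ = c * v i₀ := by
        have := congrFun hJv i₀
        simp only [Matrix.mulVec, dotProduct] at this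
        rw [this]
  have hwi : |w i₀| = c * v i₀ := by rw [hc, div_mul_cancel₀ _ (hv i₀).ne']
  rw [hwi] at h1
  have : 0 < c * v i₀ := mul_pos hcpos (hv i₀)
  exact le_of_mul_le_mul_right (by linarith) this

theorem sinkhorn_main
    (n m : ℕ) (K : Matrix (Fin n) (Fin m) ℝ) (hK : ∀ i j, 0 < K i j)
    (S : (Fin m → ℝ) → (Fin n → ℝ))
    (hS : S = fun v j => (∑ l, K j l * v l)⁻¹)
    (R : (Fin m → ℝ) → (Fin m → ℝ))
    (hR : R = fun v i => (n / m : ℝ) * (∑ j, K j i * S v j)⁻¹)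
    (v : Fin m → ℝ) (hv : ∀ i, 0 < v i) (hfix : R v = v)
    (J : Matrix (Fin m) (Fin m) ℝ)
    (hJ : J = (m / n : ℝ) •
      (Matrix.diagonal (fun i => (R v i) ^ 2) * Kᵀ *
        Matrix.diagonal (fun j => (S v j) ^ 2) * K)) :
    J.mulVec v = v ∧ (∀ i j, 0 < J i j) := by
  rcases Nat.eq_zero_or_pos m with hm | hm
  · subst hm
    exact ⟨funext fun i => i.elim0, fun i => i.elim0⟩
  haveI : Nonempty (Fin m) := ⟨⟨0, hm⟩⟩
  have hmR : (0:ℝ) < m := Nat.cast_pos.mpr hm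
  have hn : 0 < n := by
    rcases Nat.eq_zero_or_pos n with h | h
    · exfalso
      have h0 := congrFun hfix ⟨0, hm⟩
      rw [hR] at h0
      simp only [h, Nat.cast_zero, zero_div, zero_mul] at h0
      exact (hv ⟨0, hm⟩).ne' h0.symm
    · exact h
  haveI : Nonempty (Fin n) := ⟨⟨0, hn⟩⟩
  have hnR : (0:ℝ) < n := Nat.cast_pos.mpr hn
  have hSv : ∀ j, S v j = (∑ l, K j l * v l)⁻¹ := fun j => by rw [hS]
  have htpos : ∀ j, 0 < ∑ l, K j l * v l := fun j =>
    Finset.sum_pos (fun l _ => mul_pos (hK j l) (hv l)) Finset.univ_nonempty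
  have hSpos : ∀ j, 0 < S v j := fun j => by rw [hSv]; exact inv_pos.mpr (htpos j)
  have hApos : ∀ i, 0 < ∑ j, K j i * S v j := fun i =>
    Finset.sum_pos (fun j _ => mul_pos (hK j i) (hSpos j)) Finset.univ_nonempty
  have hfix' : ∀ i, v i = (n / m : ℝ) * (∑ j, K j i * S v j)⁻¹ := fun i => by
    have := congrFun hfix i; rw [hR] at this; exact this.symm
  have hA : ∀ i, (∑ j, K j i * S v j) * v i = (n / m : ℝ) := fun i => by
    rw [hfix' i, mul_comm, mul_assoc, inv_mul_cancel₀ (hApos i).ne', mul_one]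
  have hRv : R v = v := hfix
  have hJentry : ∀ i k, J i k
      = (m / n : ℝ) * ((v i)^2 * ∑ j, K j i * ((S v j)^2 * K j k)) := by
    intro i k
    rw [hJ, hRv]
    simp only [Matrix.smul_apply, smul_eq_mul, Matrix.mul_apply,
      Matrix.diagonal_apply, Matrix.transpose_apply, Finset.sum_mul,
      Finset.mul_sum, Finset.sum_ite_eq, Finset.sum_ite_eq',
      Finset.mem_univ, if_true, ite_mul, zero_mul, mul_ite, mul_zero]
    exact Finset.sum_congr rfl fun j _ => by ring
  constructor
  · funext i
    have hmv : (J.mulVec v) i = ∑ k, J i k * v k := rfl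
    rw [hmv]
    have hSS : ∀ j, (S v j)^2 * (∑ l, K j l * v l) = S v j := fun j => by
      rw [hSv, sq, mul_assoc, inv_mul_cancel₀ (htpos j).ne', mul_one]
    calc ∑ k, J i k * v k
        = ∑ k, ∑ j, (m/n:ℝ) * (v i^2 * (K j i * ((S v j)^2 * (K j k * v k)))) := by
          refine Finset.sum_congr rfl fun k _ => ?_
          rw [hJentry]
          simp only [Finset.mul_sum, Finset.sum_mul]
          exact Finset.sum_congr rfl fun j _ => by ring
      _ = ∑ j, ∑ k, (m/n:ℝ) * (v i^2 * (K j i * ((S v j)^2 * (K j k * v k)))) :=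
          Finset.sum_comm
      _ = ∑ j, (m/n:ℝ) * (v i^2 * (K j i * ((S v j)^2 * ∑ k, K j k * v k))) := by
          refine Finset.sum_congr rfl fun j _ => ?_
          simp only [Finset.mul_sum]
      _ = ∑ j, (m/n:ℝ) * (v i^2 * (K j i * S v j)) := by
          refine Finset.sum_congr rfl fun j _ => ?_
          rw [hSS j]
      _ = (m/n:ℝ) * (v i^2 * ∑ j, K j i * S v j) := by
          simp only [Finset.mul_sum]
      _ = (m/n:ℝ) * (v i * (n/m:ℝ)) := by
          rw [← hA i]; ring
      _ = v i := by field_simp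
  · intro i k
    rw [hJentry]
    exact mul_pos (div_pos hmR hnR) (mul_pos (pow_pos (hv i) 2)
      (Finset.sum_pos (fun j _ => mul_pos (hK j i)
        (mul_pos (pow_pos (hSpos j) 2) (hK j k))) Finset.univ_nonempty))


/-- A positive fixed point `v` of the Sinkhorn map `R` is an eigenvector of the
Jacobian `J_R(v)` with eigenvalue `1`; moreover `J_R(v)` is entrywise positive,
and by Perron–Frobenius `1` is its largest eigenvalue (every real eigenvalue μ
satisfies `|μ| ≤ 1`). -/
theorem sinkhorn_fixed_point_perron_eigenvector
    (n m : ℕ) (K : Matrix (Fin n) (Fin m) ℝ) (hK : ∀ i j, 0 < K i j)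
    (S : (Fin m → ℝ) → (Fin n → ℝ))
    (hS : S = fun v j => (∑ l, K j l * v l)⁻¹)
    (R : (Fin m → ℝ) → (Fin m → ℝ))
    (hR : R = fun v i => (n / m : ℝ) * (∑ j, K j i * S v j)⁻¹)
    (v : Fin m → ℝ) (hv : ∀ i, 0 < v i) (hfix : R v = v)
    (J : Matrix (Fin m) (Fin m) ℝ)
    (hJ : J = (m / n : ℝ) •
      (Matrix.diagonal (fun i => (R v i) ^ 2) * Kᵀ *
        Matrix.diagonal (fun j => (S v j) ^ 2) * K)) :
    J.mulVec v = v ∧ (∀ i j, 0 < J i j) ∧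
    (∀ (μ : ℝ) (w : Fin m → ℝ), w ≠ 0 → J.mulVec w = μ • w → |μ| ≤ 1) := by
  obtain ⟨h1, h2⟩ := sinkhorn_main n m K hK S hS R hR v hv hfix J hJ
  exact ⟨h1, h2, fun μ w hw heig => perron_bound_aux J h2 v hv h1 μ w hw heig⟩
end

section
/- (Ky Fan maximum principle) Let A ∈ ℝ^{d×d} be symmetric with eigenvalues λ₁(A) ≥ λ₂(A) ≥ ⋯ ≥ λ_d(A). For 1 ≤ p ≤ d, the maximum of tr(Pᵀ A P) over matrices P ∈ ℝ^{d×p} with PᵀP = I_p equals λ₁(A) + ⋯ + λ_p(A), and the maximum is attained when the columns of P form an orthonormal basis of eigenvectors for the p largest eigenvalues. -/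
open Matrix
section KyFanAux
open Finset

lemma kf_map_eq (d p : ℕ) (hp : p ≤ d) :
    (univ : Finset (Fin p)).map (Fin.castLEEmb hp)
      = univ.filter (fun j : Fin d => (j : ℕ) < p) := by
  ext j
  simp only [Finset.mem_map, Finset.mem_univ, true_and, Finset.mem_filter,
    Fin.castLEEmb_apply]
  constructor
  · rintro ⟨i, rfl⟩; exact i.2
  · intro h; exact ⟨⟨(j : ℕ), h⟩, by ext; simp⟩

lemma kf_castLE_sum (d p : ℕ) (hp : p ≤ d) (f : Fin d → ℝ) :
    ∑ i : Fin p, f (Fin.castLE hp i) = ∑ i : Fin d, if (i : ℕ) < p then f i else 0 := by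
  rw [← Finset.sum_filter, ← kf_map_eq d p hp, Finset.sum_map]
  simp [Fin.castLEEmb_apply]

lemma kf_sum_le (d p : ℕ) (hp : p ≤ d) (μ s : Fin d → ℝ) (hμ : Antitone μ)
    (hs0 : ∀ i, 0 ≤ s i) (hs1 : ∀ i, s i ≤ 1) (hsum : ∑ i, s i = p) :
    ∑ i, μ i * s i ≤ ∑ i : Fin p, μ (Fin.castLE hp i) := by
  rcases Nat.eq_zero_or_pos d with hd | hd
  · have hp0 : p = 0 := by omega
    subst hp0; subst hd; simp
  set t : Fin d → ℝ := fun i => if (i : ℕ) < p then 1 else 0 with ht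
  have ht_sum : ∑ i, t i = p := by
    have := kf_castLE_sum d p hp (fun _ => (1 : ℝ))
    simp only [Finset.sum_const, Finset.card_univ, Fintype.card_fin, nsmul_eq_mul,
      mul_one] at this
    rw [ht, ← this]
  have hrhs : ∑ i : Fin p, μ (Fin.castLE hp i) = ∑ i, μ i * t i := by
    rw [kf_castLE_sum d p hp μ]
    refine Finset.sum_congr rfl fun i _ => ?_
    by_cases h : (i : ℕ) < p <;> simp [ht, h]
  set c : ℝ := if h : p < d then μ ⟨p, h⟩ else μ ⟨d - 1, Nat.sub_lt hd one_pos⟩ with hc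
  have hkey : ∀ i, (μ i - c) * (s i - t i) ≤ 0 := by
    intro i
    by_cases hip : (i : ℕ) < p
    · have h1 : t i = 1 := if_pos hip
      have hcle : c ≤ μ i := by
        by_cases h : p < d
        · rw [hc, dif_pos h]; exact hμ (by simp [Fin.le_def]; omega)
        · rw [hc, dif_neg h]; exact hμ (by simp [Fin.le_def]; omega)
      nlinarith [hs1 i]
    · have h1 : t i = 0 := if_neg hip
      have h2 : p < d := lt_of_le_of_lt (not_lt.mp hip) i.2
      have hcge : μ i ≤ c := by
        rw [hc, dif_pos h2]; exact hμ (by simp [Fin.le_def]; omega)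
      nlinarith [hs0 i]
  have hsumkey : ∑ i, (μ i - c) * (s i - t i) ≤ 0 :=
    Finset.sum_nonpos fun i _ => hkey i
  have expand : ∑ i, (μ i - c) * (s i - t i)
      = (∑ i, μ i * s i) - (∑ i, μ i * t i) - c * (∑ i, s i) + c * (∑ i, t i) := by
    simp only [sub_mul, mul_sub, Finset.sum_sub_distrib, Finset.mul_sum]
    ring
  rw [hrhs]
  rw [expand, hsum, ht_sum] at hsumkey
  linarith

lemma kf_trace (d p : ℕ) (μ : Fin d → ℝ) (Q : Matrix (Fin d) (Fin p) ℝ) :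
    (Qᵀ * Matrix.diagonal μ * Q).trace = ∑ i, μ i * ∑ j, Q i j ^ 2 := by
  simp only [Matrix.trace, Matrix.diag_apply, Matrix.mul_apply, Matrix.diagonal_apply,
    Matrix.transpose_apply, mul_ite, ite_mul, mul_zero, zero_mul, Finset.sum_ite_eq,
    Finset.sum_ite_eq', Finset.mem_univ, if_true]
  rw [Finset.sum_comm]
  refine Finset.sum_congr rfl fun i _ => ?_
  rw [Finset.mul_sum]
  refine Finset.sum_congr rfl fun j _ => by ring

end KyFanAux

/-- Ky Fan maximum principle: for a symmetric `A = V D(μ) Vᵀ` with `V`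
orthogonal and eigenvalues `μ` listed in decreasing order, the maximum of
`tr(Pᵀ A P)` over `P` with `Pᵀ P = I_p` equals `μ₁ + ⋯ + μ_p`, attained when
the columns of `P` are the eigenvectors of the `p` largest eigenvalues
(the first `p` columns of `V`). -/
theorem ky_fan_max_principle
    (d p : ℕ) (hp : p ≤ d)
    (A V : Matrix (Fin d) (Fin d) ℝ) (μ : Fin d → ℝ)
    (hA : Aᵀ = A) (hV : Vᵀ * V = 1) (hμ : Antitone μ)
    (hdec : A = V * Matrix.diagonal μ * Vᵀ)
    (P₀ : Matrix (Fin d) (Fin p) ℝ)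
    (hP₀ : P₀ = Matrix.of fun i j => V i (Fin.castLE hp j)) :
    IsGreatest {x | ∃ P : Matrix (Fin d) (Fin p) ℝ, Pᵀ * P = 1 ∧
        x = (Pᵀ * A * P).trace}
      (∑ i : Fin p, μ (Fin.castLE hp i)) ∧
    (P₀ᵀ * A * P₀).trace = ∑ i : Fin p, μ (Fin.castLE hp i) := by
  have hVVT : V * Vᵀ = 1 := mul_eq_one_comm.mp hV
  -- conjugation identity
  have key : ∀ P : Matrix (Fin d) (Fin p) ℝ,
      Pᵀ * A * P = (Vᵀ * P)ᵀ * Matrix.diagonal μ * (Vᵀ * P) := by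
    intro P
    rw [hdec, Matrix.transpose_mul, Matrix.transpose_transpose]
    simp only [Matrix.mul_assoc]
  -- entries of Q₀ := Vᵀ * P₀
  have hQ₀ : ∀ i j, (Vᵀ * P₀) i j = if i = Fin.castLE hp j then (1:ℝ) else 0 := by
    intro i j
    have h2 := congrFun (congrFun hV i) (Fin.castLE hp j)
    simp only [Matrix.mul_apply, Matrix.transpose_apply, Matrix.one_apply] at h2 ⊢
    rw [hP₀]
    simpa only [Matrix.of_apply] using h2
  -- orthonormality of P₀
  have hP₀orth : P₀ᵀ * P₀ = 1 := by
    ext j k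
    have h2 := congrFun (congrFun hV (Fin.castLE hp j)) (Fin.castLE hp k)
    simp only [Matrix.mul_apply, Matrix.transpose_apply, Matrix.one_apply] at h2 ⊢
    rw [hP₀]
    simp only [Matrix.of_apply]
    rw [h2]
    by_cases h : j = k
    · subst h; simp
    · rw [if_neg h, if_neg (by simp [Fin.ext_iff] at h ⊢; omega)]
  -- trace attained at P₀
  have hattain : (P₀ᵀ * A * P₀).trace = ∑ i : Fin p, μ (Fin.castLE hp i) := by
    rw [key P₀, kf_trace]
    have hsimp : ∀ i : Fin d, (∑ j : Fin p, (Vᵀ * P₀) i j ^ 2)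
        = if (i : ℕ) < p then (1:ℝ) else 0 := by
      intro i
      by_cases h : (i : ℕ) < p
      · rw [if_pos h, Finset.sum_eq_single ⟨(i : ℕ), h⟩]
        · rw [hQ₀]; rw [if_pos (by ext; simp)]; norm_num
        · intro j _ hj
          rw [hQ₀, if_neg (by simp [Fin.ext_iff] at hj ⊢; omega)]
          norm_num
        · intro h'; exact absurd (Finset.mem_univ _) h'
      · rw [if_neg h, Finset.sum_eq_zero]
        intro j _
        rw [hQ₀, if_neg (by simp [Fin.ext_iff]; omega)]
        norm_num
    simp only [hsimp, mul_ite, mul_one, mul_zero]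
    rw [← kf_castLE_sum d p hp μ]
  refine ⟨⟨⟨P₀, hP₀orth, hattain.symm⟩, ?_⟩, hattain⟩
  rintro x ⟨P, hPorth, rfl⟩
  set Q : Matrix (Fin d) (Fin p) ℝ := Vᵀ * P with hQdef
  have hQorth : Qᵀ * Q = 1 := by
    rw [hQdef, Matrix.transpose_mul, Matrix.transpose_transpose, Matrix.mul_assoc,
      ← Matrix.mul_assoc V Vᵀ P, hVVT, Matrix.one_mul, hPorth]
  set s : Fin d → ℝ := fun i => ∑ j, Q i j ^ 2 with hs
  have hs0 : ∀ i, 0 ≤ s i := fun i => Finset.sum_nonneg fun j _ => sq_nonneg _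
  have hcol : ∀ j, ∑ i, Q i j ^ 2 = 1 := by
    intro j
    have h2 := congrFun (congrFun hQorth j) j
    simpa [Matrix.mul_apply, Matrix.transpose_apply, Matrix.one_apply, sq] using h2
  have hsum : ∑ i, s i = p := by
    rw [hs]
    rw [Finset.sum_comm]
    simp [hcol]
  -- s i ≤ 1 via idempotence of Q * Qᵀ
  have hs1 : ∀ i, s i ≤ 1 := by
    intro i
    set M : Matrix (Fin d) (Fin d) ℝ := Q * Qᵀ with hM
    have hMsym : ∀ a b, M a b = M b a := by
      intro a b
      have hMT : Mᵀ = M := by rw [hM, Matrix.transpose_mul, Matrix.transpose_transpose]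
      have h3 := congrFun (congrFun hMT b) a
      simpa [Matrix.transpose_apply] using h3
    have hMM : M * M = M := by
      rw [hM, Matrix.mul_assoc, ← Matrix.mul_assoc Qᵀ Q Qᵀ, hQorth, Matrix.one_mul]
    have hMdiag : M i i = s i := by
      simp [hM, Matrix.mul_apply, Matrix.transpose_apply, sq, hs]
    have e1 : M i i = ∑ j, M i j ^ 2 := by
      conv_lhs => rw [← hMM]
      simp only [Matrix.mul_apply, sq]
      exact Finset.sum_congr rfl fun j _ => by rw [hMsym j i]
    have e2 : (M i i) ^ 2 ≤ ∑ j, M i j ^ 2 :=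
      Finset.single_le_sum (fun j _ => sq_nonneg (M i j)) (Finset.mem_univ i)
    rw [← e1, hMdiag] at e2
    nlinarith [hs0 i]
  have htr : (Pᵀ * A * P).trace = ∑ i, μ i * s i := by
    rw [key P, ← hQdef, kf_trace]
  rw [htr]
  exact kf_sum_le d p hp μ s hμ hs0 hs1 hsum
end

section
/- (Ky Fan minimum principle) Let A ∈ ℝ^{d×d} be symmetric with eigenvalues λ₁(A) ≥ ⋯ ≥ λ_d(A). For 1 ≤ p ≤ d, the minimum of tr(Pᵀ A P) over P ∈ ℝ^{d×p} with PᵀP = I_p equals λ_{d−p+1}(A) + ⋯ + λ_d(A). -/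
/-!
Writing `P = V Q`, the trace `tr(Pᵀ A P)` becomes `∑ μᵢ sᵢ` with `sᵢ = (Q Qᵀ)ᵢᵢ` the diagonal of an
orthogonal projection of rank `p`, so `0 ≤ sᵢ ≤ 1` and `∑ sᵢ = p`. Under these constraints a weighted
sum of the decreasing `μᵢ` is smallest when the whole weight sits on the last `p` indices
("bathtub principle"), and the last `p` columns of `V` realize exactly these weights.
-/

open Matrix Finset

theorem Finset.sum_le_sum_mul_of_forall_le_of_forall_ge {ι : Type*} [Fintype ι] [DecidableEq ι]
    (T : Finset ι) {μ s : ι → ℝ} (c : ℝ) (hT : ∀ i ∈ T, μ i ≤ c) (hTc : ∀ i ∉ T, c ≤ μ i)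
    (hs₀ : ∀ i, 0 ≤ s i) (hs₁ : ∀ i, s i ≤ 1) (hs : ∑ i, s i = #T) :
    ∑ i ∈ T, μ i ≤ ∑ i, μ i * s i := by
  set χ : ι → ℝ := fun i => if i ∈ T then 1 else 0
  have hχ : ∑ i, χ i = #T := by simp [χ]
  have hgain : ∀ i, 0 ≤ (μ i - c) * (s i - χ i) := by
    intro i
    by_cases hi : i ∈ T
    · exact mul_nonneg_of_nonpos_of_nonpos (by linarith [hT i hi]) (by simp [χ, hi, hs₁ i])
    · exact mul_nonneg (by linarith [hTc i hi]) (by simp [χ, hi, hs₀ i])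
  -- `s` and `χ` have the same total, so shifting `μ` by `c` does not change `∑ μ (s - χ)`.
  calc ∑ i ∈ T, μ i = ∑ i, μ i * χ i := by simp [χ]
    _ ≤ ∑ i, (μ i * χ i + (μ i - c) * (s i - χ i)) :=
        sum_le_sum fun i _ => le_add_of_nonneg_right (hgain i)
    _ = ∑ i, μ i * s i + c * (∑ i, χ i - ∑ i, s i) := by
        rw [mul_sub, mul_sum, mul_sum, ← sum_sub_distrib, ← sum_add_distrib]
        exact sum_congr rfl fun i _ => by ring
    _ = ∑ i, μ i * s i := by rw [hχ, hs, sub_self, mul_zero, add_zero]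

def Fin.tailEmbedding {p d : ℕ} (hp : p ≤ d) : Fin p ↪ Fin d where
  toFun j := ⟨d - p + j, by omega⟩
  inj' a b h := Fin.ext (by simpa using h)

@[simp]
theorem Fin.val_tailEmbedding {p d : ℕ} (hp : p ≤ d) (j : Fin p) :
    (Fin.tailEmbedding hp j : ℕ) = d - p + j :=
  rfl

theorem Fin.mem_map_tailEmbedding {p d : ℕ} (hp : p ≤ d) (i : Fin d) :
    i ∈ univ.map (Fin.tailEmbedding hp) ↔ d - p ≤ i := by
  simp only [mem_map, mem_univ, true_and]
  exact ⟨by rintro ⟨j, rfl⟩; simp, fun hi => ⟨⟨i - (d - p), by omega⟩, by ext; simp; omega⟩⟩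

theorem Fin.sum_tailEmbedding_le_sum_mul_of_antitone {p d : ℕ} (hp : p ≤ d) {μ s : Fin d → ℝ}
    (hμ : Antitone μ) (hs₀ : ∀ i, 0 ≤ s i) (hs₁ : ∀ i, s i ≤ 1) (hs : ∑ i, s i = p) :
    ∑ j, μ (Fin.tailEmbedding hp j) ≤ ∑ i, μ i * s i := by
  obtain ⟨c, hc_tail, hc_head⟩ :
      ∃ c, (∀ i : Fin d, d - p ≤ i → μ i ≤ c) ∧ ∀ i : Fin d, ↑i < d - p → c ≤ μ i := by
    rcases Nat.eq_zero_or_pos (d - p) with h | h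
    · exact ⟨⨆ i, μ i, fun i _ => le_ciSup (Finite.bddAbove_range μ) i, by omega⟩
    · refine ⟨μ ⟨d - p - 1, by omega⟩, fun i hi => hμ ?_, fun i hi => hμ ?_⟩ <;>
        simp only [Fin.le_def] <;> omega
  rw [← sum_map univ (Fin.tailEmbedding hp)]
  refine sum_le_sum_mul_of_forall_le_of_forall_ge _ c (fun i hi => hc_tail i ?_)
    (fun i hi => hc_head i ?_) hs₀ hs₁ (by simpa using hs)
  · exact (Fin.mem_map_tailEmbedding hp i).1 hi
  · exact lt_of_not_ge (mt (Fin.mem_map_tailEmbedding hp i).2 hi)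

namespace Matrix

theorem diag_eq_sum_sq_of_mul_self {m : Type*} [Fintype m] {R : Matrix m m ℝ} (hR : Rᵀ = R)
    (hRR : R * R = R) (i : m) : R i i = ∑ k, R i k ^ 2 := by
  conv_lhs => rw [← hRR]
  rw [mul_apply]
  exact sum_congr rfl fun k _ => by rw [sq, ← transpose_apply R k i, hR]

theorem diag_mul_transpose_nonneg {m n : Type*} [Fintype n] (Q : Matrix m n ℝ) (i : m) :
    0 ≤ (Q * Qᵀ) i i :=
  sum_nonneg fun _ _ => mul_self_nonneg _

section Orthonormal

variable {m n : Type*} [Fintype m] [Fintype n] [DecidableEq n] {Q : Matrix m n ℝ}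

theorem diag_mul_transpose_le_one (hQ : Qᵀ * Q = 1) (i : m) : (Q * Qᵀ) i i ≤ 1 := by
  have hsymm : (Q * Qᵀ)ᵀ = Q * Qᵀ := by rw [transpose_mul, transpose_transpose]
  have hidem : Q * Qᵀ * (Q * Qᵀ) = Q * Qᵀ := by
    rw [Matrix.mul_assoc, ← Matrix.mul_assoc Qᵀ, hQ, Matrix.one_mul]
  have hsq : (Q * Qᵀ) i i ^ 2 ≤ (Q * Qᵀ) i i := by
    conv_rhs => rw [diag_eq_sum_sq_of_mul_self hsymm hidem i]
    exact single_le_sum (f := fun k => (Q * Qᵀ) i k ^ 2) (fun k _ => sq_nonneg _) (mem_univ i)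
  nlinarith [diag_mul_transpose_nonneg Q i]

theorem sum_diag_mul_transpose (hQ : Qᵀ * Q = 1) : ∑ i, (Q * Qᵀ) i i = Fintype.card n := by
  change (Q * Qᵀ).trace = _
  rw [trace_mul_comm, hQ, trace_one]

end Orthonormal

theorem trace_transpose_mul_diagonal_mul {m n : Type*} [Fintype m] [Fintype n] [DecidableEq m]
    (Q : Matrix m n ℝ) (μ : m → ℝ) :
    (Qᵀ * diagonal μ * Q).trace = ∑ i, μ i * (Q * Qᵀ) i i := by
  rw [Matrix.mul_assoc, trace_mul_comm, Matrix.mul_assoc]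
  simp [trace, diagonal_mul]

theorem submatrix_transpose_mul_mul_submatrix {α k m n : Type*} [Fintype m] [Fintype k]
    [NonUnitalNonAssocSemiring α] (V : Matrix m k α) (A : Matrix m m α) (e : n → k) :
    (V.submatrix id e)ᵀ * A * V.submatrix id e = (Vᵀ * A * V).submatrix e e := by
  rw [transpose_submatrix, submatrix_mul _ _ _ id _ Function.bijective_id,
    submatrix_mul _ _ _ id _ Function.bijective_id, submatrix_id_id]

theorem sum_tailEmbedding_le_trace_transpose_mul_diagonal_mul {p d : ℕ} (hp : p ≤ d)
    {μ : Fin d → ℝ} (hμ : Antitone μ) {Q : Matrix (Fin d) (Fin p) ℝ} (hQ : Qᵀ * Q = 1) :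
    ∑ j, μ (Fin.tailEmbedding hp j) ≤ (Qᵀ * diagonal μ * Q).trace := by
  rw [trace_transpose_mul_diagonal_mul]
  exact Fin.sum_tailEmbedding_le_sum_mul_of_antitone hp hμ (diag_mul_transpose_nonneg Q)
    (diag_mul_transpose_le_one hQ) (by simpa using sum_diag_mul_transpose hQ)

end Matrix

/-- Ky Fan minimum principle: for a symmetric `A = V D(μ) Vᵀ` with `V`
orthogonal and eigenvalues `μ` listed in decreasing order, the minimum of
`tr(Pᵀ A P)` over `P` with `Pᵀ P = I_p` equals `μ_{d−p+1} + ⋯ + μ_d`. -/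
theorem ky_fan_min_principle
    (d p : ℕ) (hp : p ≤ d)
    (A V : Matrix (Fin d) (Fin d) ℝ) (μ : Fin d → ℝ)
    (hV : Vᵀ * V = 1) (hμ : Antitone μ)
    (hdec : A = V * Matrix.diagonal μ * Vᵀ) :
    IsLeast {x | ∃ P : Matrix (Fin d) (Fin p) ℝ, Pᵀ * P = 1 ∧
        x = (Pᵀ * A * P).trace}
      (∑ i : Fin p, μ ⟨d - p + i.val, by have := i.isLt; omega⟩) := by
  have hconj : Vᵀ * A * V = diagonal μ := by
    calc Vᵀ * A * V = Vᵀ * V * diagonal μ * (Vᵀ * V) := by simp only [hdec, Matrix.mul_assoc]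
      _ = diagonal μ := by rw [hV, Matrix.one_mul, Matrix.mul_one]
  refine ⟨⟨V.submatrix id (Fin.tailEmbedding hp), ?_, ?_⟩, ?_⟩
  · simpa [hV, submatrix_one_embedding] using
      submatrix_transpose_mul_mul_submatrix V 1 (Fin.tailEmbedding hp)
  · rw [submatrix_transpose_mul_mul_submatrix, hconj, submatrix_diagonal_embedding, trace_diagonal]
    rfl
  · rintro _ ⟨P, hP, rfl⟩
    have hQ : (Vᵀ * P)ᵀ * (Vᵀ * P) = 1 := by
      rw [transpose_mul, transpose_transpose, Matrix.mul_assoc, ← Matrix.mul_assoc V,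
        mul_eq_one_comm.mp hV, Matrix.one_mul, hP]
    have hPAP : Pᵀ * A * P = (Vᵀ * P)ᵀ * diagonal μ * (Vᵀ * P) := by
      rw [hdec, transpose_mul, transpose_transpose]
      simp only [Matrix.mul_assoc]
    rw [hPAP]
    exact sum_tailEmbedding_le_trace_transpose_mul_diagonal_mul hp hμ hQ
end
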